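/- For all x ∈ ℝⁿ, the Ackley function satisfies f(x) ≥ 0, with equality if and only if x = (0,...,0). -/

import Mathlib

/-! Write `f x = 20 (1 - exp (-√S / 5)) + (e - exp C)`, where `S` is the mean of the `x i ^ 2` and
`C ≤ 1` the mean of the `cos (2π x i)`. Both summands are nonnegative, and the first vanishes
exactly when `S = 0`, i.e. when `x = 0`; at `x = 0` the second vanishes as well. -/

open Real Finset

lemma exp_neg_mul_sqrt_le_one {a : ℝ} (ha : 0 ≤ a) (s : ℝ) : exp (-a * √s) ≤ 1 := by
  rw [exp_le_one_iff, neg_mul]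
  exact neg_nonpos.mpr (mul_nonneg ha (sqrt_nonneg s))

lemma exp_neg_mul_sqrt_eq_one_iff {a s : ℝ} (ha : 0 < a) (hs : 0 ≤ s) :
    exp (-a * √s) = 1 ↔ s = 0 := by
  rw [exp_eq_one_iff, mul_eq_zero, sqrt_eq_zero hs, neg_eq_zero, or_iff_right ha.ne']

section Ackley

variable {ι : Type*} [Fintype ι]

lemma mul_sum_sq_eq_zero_iff {c : ℝ} (hc : c ≠ 0) (x : ι → ℝ) :
    c * ∑ i, x i ^ 2 = 0 ↔ x = 0 := by
  rw [mul_eq_zero, or_iff_right hc, Fintype.sum_eq_zero_iff_of_nonneg fun i => sq_nonneg (x i)]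
  simp [funext_iff]

lemma one_div_card_mul_sum_le_one {g : ι → ℝ} (hg : ∀ i, g i ≤ 1) :
    1 / (Fintype.card ι : ℝ) * ∑ i, g i ≤ 1 := by
  rcases isEmpty_or_nonempty ι with hι | hι
  · simp
  rw [one_div, inv_mul_le_iff₀ (by positivity), mul_one]
  simpa using sum_le_sum fun i (_ : i ∈ univ) => hg i

noncomputable def ackley (x : ι → ℝ) : ℝ :=
  -20 * exp (-(1/5) * √(1 / (Fintype.card ι : ℝ) * ∑ i, x i ^ 2))
    - exp (1 / (Fintype.card ι : ℝ) * ∑ i, cos (2 * π * x i)) + 20 + exp 1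

lemma exp_mean_cos_le_exp_one (x : ι → ℝ) :
    exp (1 / (Fintype.card ι : ℝ) * ∑ i, cos (2 * π * x i)) ≤ exp 1 :=
  exp_le_exp.mpr (one_div_card_mul_sum_le_one fun _ => cos_le_one _)

theorem zero_le_ackley (x : ι → ℝ) : 0 ≤ ackley x := by
  have hsq := exp_neg_mul_sqrt_le_one (a := 1/5) (by norm_num)
    (1 / (Fintype.card ι : ℝ) * ∑ i, x i ^ 2)
  have hcos := exp_mean_cos_le_exp_one x
  unfold ackley
  linarith

theorem ackley_eq_zero_iff [Nonempty ι] (x : ι → ℝ) : ackley x = 0 ↔ x = 0 := by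
  have hcard : (Fintype.card ι : ℝ) ≠ 0 := Nat.cast_ne_zero.mpr Fintype.card_ne_zero
  constructor
  · intro h
    have hS : 0 ≤ 1 / (Fintype.card ι : ℝ) * ∑ i, x i ^ 2 := by positivity
    have hsq := exp_neg_mul_sqrt_le_one (a := 1/5) (by norm_num)
      (1 / (Fintype.card ι : ℝ) * ∑ i, x i ^ 2)
    have hcos := exp_mean_cos_le_exp_one x
    have hsq_eq : exp (-(1/5) * √(1 / (Fintype.card ι : ℝ) * ∑ i, x i ^ 2)) = 1 := by
      unfold ackley at h
      linarith
    rwa [exp_neg_mul_sqrt_eq_one_iff (by norm_num) hS,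
      mul_sum_sq_eq_zero_iff (one_div_ne_zero hcard)] at hsq_eq
  · rintro rfl
    simp only [ackley, Pi.zero_apply, ne_eq, OfNat.ofNat_ne_zero, not_false_eq_true, zero_pow,
      sum_const_zero, mul_zero, sqrt_zero, exp_zero, mul_one, cos_zero, sum_const, card_univ,
      nsmul_eq_mul, one_div, inv_mul_cancel₀ hcard]
    ring

end Ackley

theorem ackley_nonneg (n : ℕ) (hn : 1 ≤ n)
    (f : (Fin n → ℝ) → ℝ)
    (hf : ∀ x, f x = -20 * Real.exp (-(1/5) * Real.sqrt ((1/n) * ∑ i, (x i)^2))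
      - Real.exp ((1/n) * ∑ i, Real.cos (2 * Real.pi * x i)) + 20 + Real.exp 1) :
    ∀ x : Fin n → ℝ, f x ≥ 0 ∧ (f x = 0 ↔ x = fun _ => 0) := by
  have : Nonempty (Fin n) := ⟨⟨0, hn⟩⟩
  intro x
  have hfx : f x = ackley x := by simp [hf, ackley]
  rw [hfx]
  exact ⟨zero_le_ackley x, ackley_eq_zero_iff x⟩
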